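/- arXiv:2112.09960 — 3 statements merged into one kernel-verified Lean document; each statement's English description precedes it below -/
import Mathlib

section
/- Let x > 0, z₀ = (i - x)/(i + x), and G(z) = (z + 1)/(z (z - z₀) log z) with log the principal complex logarithm. Then the residue of G at z₀ equals -(i + x)/((x² + 1) · arctan x). -/
open Complex Filter Topology

theorem residue_at_z0 (x : ℝ) (hx : 0 < x) :
    Tendsto
      (fun z : ℂ => (z - (I - x) / (I + x)) *
        ((z + 1) / (z * (z - (I - x) / (I + x)) * Complex.log z)))
      (𝓝[≠] ((I - x) / (I + x)))
      (𝓝 (-(I + x) / ((x ^ 2 + 1) * Real.arctan x))) := by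
  set a : ℝ := Real.arctan x with ha
  have ha0 : 0 < a := by rw [ha, ← Real.arctan_zero]; exact Real.arctan_strictMono hx
  have haπ : a < Real.pi / 2 := Real.arctan_lt_pi_div_two x
  have hIx : (I + (x : ℂ)) ≠ 0 := by
    intro h
    have := congrArg Complex.im h
    simp at this
  set z₀ : ℂ := (I - x) / (I + x) with hz₀
  -- z₀ = exp(2 a i)
  have hsq : Real.sqrt (1 + x ^ 2) ^ 2 = 1 + x ^ 2 :=
    Real.sq_sqrt (by positivity)
  have hc2 : Real.cos (2 * a) = (1 - x ^ 2) / (1 + x ^ 2) := by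
    rw [Real.cos_two_mul, Real.cos_arctan]
    rw [div_pow, one_pow, hsq]
    field_simp
    ring
  have hs2 : Real.sin (2 * a) = 2 * x / (1 + x ^ 2) := by
    rw [Real.sin_two_mul, Real.sin_arctan, Real.cos_arctan]
    rw [mul_assoc, div_mul_div_comm, mul_one, ← sq, hsq]
    ring
  have hx2 : ((1 : ℂ) + (x : ℂ) ^ 2) ≠ 0 := by
    have : ((1 + x ^ 2 : ℝ) : ℂ) ≠ 0 := Complex.ofReal_ne_zero.2 (by positivity)
    push_cast at this
    exact this
  have hz0exp : z₀ = Complex.exp ((2 * a : ℝ) * I) := by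
    rw [Complex.exp_mul_I, hz₀]
    rw [← Complex.ofReal_cos, ← Complex.ofReal_sin, hc2, hs2, div_eq_iff hIx]
    push_cast
    field_simp
    ring_nf
    simp only [Complex.I_sq]
    ring
  have hlog : Complex.log z₀ = (2 * a : ℝ) * I := by
    rw [hz0exp, Complex.log_exp] <;> simp <;> nlinarith [Real.pi_pos]
  have hz0ne : z₀ ≠ 0 := by rw [hz0exp]; exact Complex.exp_ne_zero _
  have hane : (a : ℂ) ≠ 0 := by
    exact_mod_cast Complex.ofReal_ne_zero.2 ha0.ne'
  have hlogne : Complex.log z₀ ≠ 0 := by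
    rw [hlog]
    simp only [ne_eq, mul_eq_zero, Complex.I_ne_zero, or_false]
    push_cast
    intro h
    rcases mul_eq_zero.1 h with h | h
    · norm_num at h
    · exact hane h
  have him : 0 < z₀.im := by
    rw [hz0exp]
    simp only [Complex.exp_ofReal_mul_I_im]
    refine Real.sin_pos_of_pos_of_lt_pi (by linarith) (by linarith [Real.pi_pos])
  -- continuity of the simplified function at z₀
  have hcont : ContinuousAt (fun z : ℂ => (z + 1) / (z * Complex.log z)) z₀ := by
    apply ContinuousAt.div
    · exact continuousAt_id.add continuousAt_const
    · exact continuousAt_id.mul (continuousAt_clog (Complex.mem_slitPlane_iff.2 (Or.inr him.ne')))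
    · exact mul_ne_zero hz0ne hlogne
  have htend : Tendsto (fun z : ℂ => (z + 1) / (z * Complex.log z)) (𝓝[≠] z₀)
      (𝓝 ((z₀ + 1) / (z₀ * Complex.log z₀))) :=
    hcont.continuousWithinAt.tendsto
  -- the value equals the claimed residue
  have hval : (z₀ + 1) / (z₀ * Complex.log z₀) = -(I + x) / ((x ^ 2 + 1) * Real.arctan x) := by
    have hImx : (I - (x : ℂ)) ≠ 0 := by
      intro h
      have := congrArg Complex.im h
      simp at this
    have hIx2 : ((x : ℂ) ^ 2 + 1) ≠ 0 := by rw [add_comm]; exact hx2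
    have hane2 : ((Real.arctan x : ℝ) : ℂ) ≠ 0 := hane
    rw [hlog, hz₀, div_eq_div_iff
      (mul_ne_zero (div_ne_zero hImx hIx)
        (mul_ne_zero (Complex.ofReal_ne_zero.2 (by positivity)) Complex.I_ne_zero))
      (mul_ne_zero hIx2 hane2)]
    simp only [Complex.ofReal_mul, Complex.ofReal_ofNat, ← ha]
    field_simp
    ring_nf
    linear_combination (2 * I) * Complex.I_sq
  rw [← hval]
  apply htend.congr'
  filter_upwards [self_mem_nhdsWithin] with z hz
  have hzne : z - z₀ ≠ 0 := sub_ne_zero.2 hz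
  rw [show z * (z - z₀) * Complex.log z = (z - z₀) * (z * Complex.log z) by ring,
    mul_div_assoc', mul_div_mul_left _ _ hzne]
end

section
/- For every real x > 0, ∫₀^∞ (1 - t²) / (t · (x²(1-t)² + (1+t)²) · ((log t)² + π²)) dt = 0. -/
open Real

theorem integral_odd_part_vanishes (x : ℝ) (hx : 0 < x) :
    ∫ t in Set.Ioi (0 : ℝ),
      (1 - t ^ 2) / (t * (x ^ 2 * (1 - t) ^ 2 + (1 + t) ^ 2) * ((Real.log t) ^ 2 + π ^ 2))
      = 0 := by
  set F : ℝ → ℝ := fun t =>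
    (1 - t ^ 2) / (t * (x ^ 2 * (1 - t) ^ 2 + (1 + t) ^ 2) * ((Real.log t) ^ 2 + π ^ 2))
    with hF
  have himg : (fun t : ℝ => t⁻¹) '' Set.Ioi (0 : ℝ) = Set.Ioi (0 : ℝ) := by
    ext y
    simp only [Set.mem_image, Set.mem_Ioi]
    constructor
    · rintro ⟨t, ht, rfl⟩; positivity
    · intro hy; exact ⟨y⁻¹, by positivity, by simp⟩
  have key : ∫ t in Set.Ioi (0 : ℝ), F t
      = ∫ t in Set.Ioi (0 : ℝ), |-(t ^ 2)⁻¹| • F t⁻¹ := by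
    conv_lhs => rw [← himg]
    exact MeasureTheory.integral_image_eq_integral_abs_deriv_smul measurableSet_Ioi
      (fun t ht => (hasDerivAt_inv (ne_of_gt ht)).hasDerivWithinAt)
      (fun a ha b hb h => by
        simpa [inv_inj] using h) F
  have congr2 : ∫ t in Set.Ioi (0 : ℝ), |-(t ^ 2)⁻¹| • F t⁻¹
      = ∫ t in Set.Ioi (0 : ℝ), -F t := by
    apply MeasureTheory.setIntegral_congr_fun measurableSet_Ioi
    intro t ht
    have ht : (0 : ℝ) < t := ht
    have h1 : |-(t ^ 2)⁻¹| = (t ^ 2)⁻¹ := by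
      rw [abs_neg, abs_inv, abs_of_pos (by positivity)]
    have h2 : Real.log t⁻¹ = -Real.log t := Real.log_inv t
    have ht0 : t ≠ 0 := ne_of_gt ht
    have hd1 : x ^ 2 * (1 - t) ^ 2 + (1 + t) ^ 2 ≠ 0 := by positivity
    have hd2 : (Real.log t) ^ 2 + π ^ 2 ≠ 0 := by positivity
    simp only [hF, h1, h2, smul_eq_mul, neg_sq]
    field_simp
    ring
  rw [congr2, MeasureTheory.integral_neg] at key
  linarith
end

section
/- The function f(x) = 1/arctan(x) is not a Stieltjes transform on (0,∞): there exist no a ≥ 0 and nonnegative Borel measure μ on [0,∞) with ∫₀^∞ dμ(t)/(1+t) < ∞ such that 1/arctan(x) = a + ∫₀^∞ dμ(t)/(x+t) for all x > 0. -/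
open MeasureTheory

lemma arctan_le_poly {x : ℝ} (hx : 0 ≤ x) :
    Real.arctan x ≤ x - x ^ 3 / 3 + x ^ 5 / 5 := by
  have key : Monotone (fun x : ℝ => x - x ^ 3 / 3 + x ^ 5 / 5 - Real.arctan x) := by
    apply monotone_of_hasDerivAt_nonneg
      (f' := fun x : ℝ => 1 - x ^ 2 + x ^ 4 - 1 / (1 + x ^ 2))
    · intro x
      have h1 : HasDerivAt (fun x : ℝ => x - x ^ 3 / 3 + x ^ 5 / 5) (1 - x ^ 2 + x ^ 4) x := by
        have := ((hasDerivAt_id x).sub ((hasDerivAt_pow 3 x).div_const 3)).add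
          ((hasDerivAt_pow 5 x).div_const 5)
        refine this.congr_deriv ?_
        push_cast
        ring
      exact h1.sub (Real.hasDerivAt_arctan x)
    · intro x
      have h2 : (0 : ℝ) < 1 + x ^ 2 := by positivity
      have h3 : 1 - x ^ 2 + x ^ 4 - 1 / (1 + x ^ 2) = x ^ 6 / (1 + x ^ 2) := by
        field_simp
        ring
      simp only [Pi.zero_apply, h3]
      positivity
  have h := key hx
  simp only [Real.arctan_zero] at h
  norm_num at h
  linarith

lemma poly_le_arctan {x : ℝ} (hx : 0 ≤ x) :
    x - x ^ 3 / 3 + x ^ 5 / 5 - x ^ 7 / 7 ≤ Real.arctan x := by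
  have key : Monotone (fun x : ℝ => Real.arctan x - (x - x ^ 3 / 3 + x ^ 5 / 5 - x ^ 7 / 7)) := by
    apply monotone_of_hasDerivAt_nonneg
      (f' := fun x : ℝ => 1 / (1 + x ^ 2) - (1 - x ^ 2 + x ^ 4 - x ^ 6))
    · intro x
      have h1 : HasDerivAt (fun x : ℝ => x - x ^ 3 / 3 + x ^ 5 / 5 - x ^ 7 / 7)
          (1 - x ^ 2 + x ^ 4 - x ^ 6) x := by
        have := (((hasDerivAt_id x).sub ((hasDerivAt_pow 3 x).div_const 3)).add
          ((hasDerivAt_pow 5 x).div_const 5)).sub ((hasDerivAt_pow 7 x).div_const 7)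
        refine this.congr_deriv ?_
        push_cast
        ring
      exact (Real.hasDerivAt_arctan x).sub h1
    · intro x
      have h2 : (0 : ℝ) < 1 + x ^ 2 := by positivity
      have h3 : 1 / (1 + x ^ 2) - (1 - x ^ 2 + x ^ 4 - x ^ 6) = x ^ 8 / (1 + x ^ 2) := by
        field_simp
        ring
      simp only [Pi.zero_apply, h3]
      positivity
  have h := key hx
  simp only [Real.arctan_zero] at h
  norm_num at h
  linarith

set_option maxHeartbeats 1000000 in
theorem one_div_arctan_not_stieltjes :
    ¬ ∃ (a : ℝ) (μ : Measure ℝ), 0 ≤ a ∧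
      (∫⁻ t in Set.Ici (0 : ℝ), ENNReal.ofReal (1 / (1 + t)) ∂μ) < ⊤ ∧
      ∀ x : ℝ, 0 < x →
        1 / Real.arctan x = a + ∫ t in Set.Ici (0 : ℝ), 1 / (x + t) ∂μ := by
  rintro ⟨a, μ, ha, hfin, hf⟩
  have hm : ∀ c : ℝ, Measurable fun t : ℝ => 1 / (c + t) := by
    intro c
    simp only [one_div]
    exact (measurable_const.add measurable_id).inv
  -- base integrability of 1/(1+t)
  have hbase : IntegrableOn (fun t : ℝ => 1 / (1 + t)) (Set.Ici 0) μ := by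
    refine ⟨(hm 1).aestronglyMeasurable, ?_⟩
    rw [hasFiniteIntegral_iff_ofReal ?_]
    · exact hfin
    · filter_upwards [ae_restrict_mem measurableSet_Ici] with t ht
      simp only [Set.mem_Ici] at ht
      have : (0 : ℝ) < 1 + t := by linarith
      positivity
  -- integrability of 1/(x+t)
  have hintx : ∀ x : ℝ, 0 < x → IntegrableOn (fun t : ℝ => 1 / (x + t)) (Set.Ici 0) μ := by
    intro x hx
    refine Integrable.mono' (hbase.const_mul (max 1 x⁻¹)) ?_ ?_
    · exact (hm x).aestronglyMeasurable
    · filter_upwards [ae_restrict_mem measurableSet_Ici] with t ht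
      simp only [Set.mem_Ici] at ht
      have h1 : (0 : ℝ) < x + t := by linarith
      have h2 : (0 : ℝ) < 1 + t := by linarith
      have hM1 : (1 : ℝ) ≤ max 1 x⁻¹ := le_max_left _ _
      have hMx : 1 ≤ max 1 x⁻¹ * x := by
        calc (1 : ℝ) = x⁻¹ * x := by field_simp
        _ ≤ max 1 x⁻¹ * x := by
          apply mul_le_mul_of_nonneg_right (le_max_right _ _) hx.le
      rw [Real.norm_eq_abs, abs_of_nonneg (by positivity)]
      rw [div_le_iff₀ h1]
      have : max 1 x⁻¹ * (1 / (1 + t)) * (x + t)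
          = (max 1 x⁻¹ * x + max 1 x⁻¹ * t) / (1 + t) := by
        field_simp
      rw [this, le_div_iff₀ h2]
      nlinarith [mul_nonneg (sub_nonneg.mpr hM1) ht]
  -- integrability of the kernels
  have hker : ∀ u v : ℝ, 0 < u → 0 < v →
      IntegrableOn (fun t : ℝ => t / ((u + t) * (v + t))) (Set.Ici 0) μ := by
    intro u v hu hv
    refine Integrable.mono' (hbase.const_mul (max 1 v⁻¹)) ?_ ?_
    · exact (measurable_id.div
        ((measurable_const.add measurable_id).mul
          (measurable_const.add measurable_id))).aestronglyMeasurable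
    · filter_upwards [ae_restrict_mem measurableSet_Ici] with t ht
      simp only [Set.mem_Ici] at ht
      have h1 : (0 : ℝ) < u + t := by linarith
      have h2 : (0 : ℝ) < v + t := by linarith
      have h3 : (0 : ℝ) < 1 + t := by linarith
      have hM1 : (1 : ℝ) ≤ max 1 v⁻¹ := le_max_left _ _
      have hMv : 1 ≤ max 1 v⁻¹ * v := by
        calc (1 : ℝ) = v⁻¹ * v := by field_simp
        _ ≤ max 1 v⁻¹ * v := by
          apply mul_le_mul_of_nonneg_right (le_max_right _ _) hv.le
      rw [Real.norm_eq_abs, abs_of_nonneg (by positivity)]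
      rw [div_le_iff₀ (by positivity : (0:ℝ) < (u + t) * (v + t))]
      have : max 1 v⁻¹ * (1 / (1 + t)) * ((u + t) * (v + t))
          = (max 1 v⁻¹ * ((u + t) * (v + t))) / (1 + t) := by
        field_simp
      rw [this, le_div_iff₀ h3]
      nlinarith [mul_nonneg (sub_nonneg.mpr hM1) (mul_nonneg ht ht),
        mul_nonneg (sub_nonneg.mpr hMv) ht, mul_nonneg (sub_nonneg.mpr hM1) ht,
        mul_nonneg (mul_nonneg (sub_nonneg.mpr hMv) ht) ht]
  -- the key identity
  have hid : ∀ u v : ℝ, 0 < u → 0 < v →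
      u * (1 / Real.arctan u) - v * (1 / Real.arctan v)
        = (u - v) * a + (u - v) * ∫ t in Set.Ici (0 : ℝ), t / ((u + t) * (v + t)) ∂μ := by
    intro u v hu hv
    rw [hf u hu, hf v hv]
    have e1 : ∫ t in Set.Ici (0 : ℝ), (u - v) * (t / ((u + t) * (v + t))) ∂μ
        = (u - v) * ∫ t in Set.Ici (0 : ℝ), t / ((u + t) * (v + t)) ∂μ :=
      integral_const_mul _ _
    have e3 : ∫ t in Set.Ici (0 : ℝ), (u * (1 / (u + t)) - v * (1 / (v + t))) ∂μ
        = ∫ t in Set.Ici (0 : ℝ), (u - v) * (t / ((u + t) * (v + t))) ∂μ := by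
      apply setIntegral_congr_fun measurableSet_Ici
      intro t ht
      simp only [Set.mem_Ici] at ht
      have h1 : u + t ≠ 0 := by positivity
      have h2 : v + t ≠ 0 := by positivity
      field_simp
      ring
    have e4 : ∫ t in Set.Ici (0 : ℝ), (u * (1 / (u + t)) - v * (1 / (v + t))) ∂μ
        = u * (∫ t in Set.Ici (0 : ℝ), 1 / (u + t) ∂μ)
          - v * (∫ t in Set.Ici (0 : ℝ), 1 / (v + t) ∂μ) := by
      rw [integral_sub ((hintx u hu).const_mul u) ((hintx v hv).const_mul v),
        integral_const_mul, integral_const_mul]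
    have e5 : u * (∫ t in Set.Ici (0 : ℝ), 1 / (u + t) ∂μ)
          - v * (∫ t in Set.Ici (0 : ℝ), 1 / (v + t) ∂μ)
        = (u - v) * ∫ t in Set.Ici (0 : ℝ), t / ((u + t) * (v + t)) ∂μ := by
      rw [← e4, e3, e1]
    linear_combination e5
  -- the three instances
  have h1 := hid (2/5) (3/10) (by norm_num) (by norm_num)
  have h2 := hid 20 (2/5) (by norm_num) (by norm_num)
  have h3 := hid 20 18 (by norm_num) (by norm_num)
  set K1 := ∫ t in Set.Ici (0 : ℝ), t / ((2/5 + t) * (3/10 + t)) ∂μ with hK1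
  set K2 := ∫ t in Set.Ici (0 : ℝ), t / ((20 + t) * (2/5 + t)) ∂μ with hK2
  set K3 := ∫ t in Set.Ici (0 : ℝ), t / ((20 + t) * (18 + t)) ∂μ with hK3
  -- positivity of the quadratic-form combination
  have hpos : 0 ≤ 9 * K1 - 6 * K2 + K3 := by
    have hq1 := hker (2/5) (3/10) (by norm_num) (by norm_num)
    have hq2 := hker 20 (2/5) (by norm_num) (by norm_num)
    have hq3 := hker 20 18 (by norm_num) (by norm_num)
    have hcomb : 9 * K1 - 6 * K2 + K3
        = ∫ t in Set.Ici (0 : ℝ),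
            (9 * (t / ((2/5 + t) * (3/10 + t))) - 6 * (t / ((20 + t) * (2/5 + t)))
              + t / ((20 + t) * (18 + t))) ∂μ := by
      have hsub : IntegrableOn (fun t : ℝ => 9 * (t / ((2/5 + t) * (3/10 + t)))
          - 6 * (t / ((20 + t) * (2/5 + t)))) (Set.Ici 0) μ :=
        (hq1.const_mul 9).sub (hq2.const_mul 6)
      rw [integral_add hsub hq3, integral_sub (hq1.const_mul 9) (hq2.const_mul 6),
        integral_const_mul, integral_const_mul]
    rw [hcomb]
    apply setIntegral_nonneg measurableSet_Ici
    intro t ht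
    simp only [Set.mem_Ici] at ht
    have d1 : (0 : ℝ) < 2/5 + t := by linarith
    have d2 : (0 : ℝ) < 3/10 + t := by linarith
    have d3 : (0 : ℝ) < 20 + t := by linarith
    have d4 : (0 : ℝ) < 18 + t := by linarith
    have e : 9 * (t / ((2/5 + t) * (3/10 + t))) - 6 * (t / ((20 + t) * (2/5 + t)))
          + t / ((20 + t) * (18 + t))
        = t * (4 * t ^ 2 + (2329/10) * t + 320772/100)
            / ((2/5 + t) * ((3/10 + t) * ((20 + t) * (18 + t)))) := by
      field_simp
      ring
    rw [e]
    positivity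
  -- numeric bounds on arctan values
  have b1u : Real.arctan (3/10 : ℝ) ≤ 145743/500000 := by
    have := arctan_le_poly (show (0:ℝ) ≤ 3/10 by norm_num)
    norm_num at this ⊢
    linarith
  have b2l : (624226/1640625 : ℝ) ≤ Real.arctan (2/5 : ℝ) := by
    have := poly_le_arctan (show (0:ℝ) ≤ 2/5 by norm_num)
    norm_num at this ⊢
    linarith
  have h20 : Real.arctan (20 : ℝ) = Real.pi / 2 - Real.arctan ((20 : ℝ)⁻¹) := by
    have := Real.arctan_inv_of_pos (show (0:ℝ) < 20 by norm_num)
    linarith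
  have h18 : Real.arctan (18 : ℝ) = Real.pi / 2 - Real.arctan ((18 : ℝ)⁻¹) := by
    have := Real.arctan_inv_of_pos (show (0:ℝ) < 18 by norm_num)
    linarith
  have b4l : (14600041/9600000 : ℝ) ≤ Real.arctan (20 : ℝ) := by
    rw [h20]
    have hu := arctan_le_poly (show (0:ℝ) ≤ (20:ℝ)⁻¹ by norm_num)
    have hπ := Real.pi_gt_d6
    norm_num at hu hπ ⊢
    linarith
  have b3u : Real.arctan (18 : ℝ) ≤ 25366681671361/16740391500000 := by
    rw [h18]
    have hl := poly_le_arctan (show (0:ℝ) ≤ (18:ℝ)⁻¹ by norm_num)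
    have hπ := Real.pi_lt_d6
    norm_num at hl hπ ⊢
    linarith
  -- positivity of the arctan values
  have p1 : (0 : ℝ) < Real.arctan (3/10 : ℝ) := by
    have := poly_le_arctan (show (0:ℝ) ≤ 3/10 by norm_num)
    norm_num at this
    linarith
  have p2 : (0 : ℝ) < Real.arctan (2/5 : ℝ) := by linarith
  have p3 : (0 : ℝ) < Real.arctan (18 : ℝ) := by
    have hπ := Real.pi_gt_d6
    have hu := arctan_le_poly (show (0:ℝ) ≤ (18:ℝ)⁻¹ by norm_num)
    rw [h18]
    norm_num at hu hπ ⊢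
    linarith
  have p4 : (0 : ℝ) < Real.arctan (20 : ℝ) := by linarith
  -- reciprocal bounds
  have g1 : (1 : ℝ) / (145743/500000) ≤ 1 / Real.arctan (3/10 : ℝ) :=
    one_div_le_one_div_of_le p1 b1u
  have g2 : 1 / Real.arctan (2/5 : ℝ) ≤ (1 : ℝ) / (624226/1640625) :=
    one_div_le_one_div_of_le (by norm_num) b2l
  have g3 : (1 : ℝ) / (25366681671361/16740391500000) ≤ 1 / Real.arctan (18 : ℝ) :=
    one_div_le_one_div_of_le p3 b3u
  have g4 : 1 / Real.arctan (20 : ℝ) ≤ (1 : ℝ) / (14600041/9600000) :=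
    one_div_le_one_div_of_le (by norm_num) b4l
  -- put everything together
  have hS : (0 : ℝ) ≤ 90 * ((2/5) * (1 / Real.arctan (2/5 : ℝ))
        - (3/10) * (1 / Real.arctan (3/10 : ℝ)))
      - (30/98) * (20 * (1 / Real.arctan (20 : ℝ)) - (2/5) * (1 / Real.arctan (2/5 : ℝ)))
      + (1/2) * (20 * (1 / Real.arctan (20 : ℝ)) - 18 * (1 / Real.arctan (18 : ℝ))) := by
    linarith [h1, h2, h3, hpos, ha]
  norm_num at g1 g2 g3 g4
  simp only [one_div] at hS
  linarith [hS, g1, g2, g3, g4]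
end
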